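/- Let F be a Borel probability measure on [0,1]. For every g ∈ C²([0,1]) and every x ∈ [0,1]: ∫_{[0,1]} [ x ( g(x(1−y)+y) − g(x) ) + (1−x) ( g(x(1−y)) − g(x) ) ] y^{−2} F(dy) = (1/2) x(1−x) · E[ g''( x(1−W) + W V ) ], where the integrand on the left is extended continuously at y = 0 by its limit (1/2) x(1−x) g''(x). -/

import Mathlib

/-!
For `y ≠ 0` the identity holds pointwise in `y` by two applications of the fundamental theorem
of calculus: integrating `g''` along the segment `v ↦ x(1-uy) + uyv` gives a difference of
`g'` at `x + y(1-x)u` and `x - yxu`, and the factor `2u` turns the `u`-integral into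
difference quotients of `g` with steps `y(1-x)` and `-yx`. At `y = 0` both sides are
`x(1-x)g''(x)/2` since `∫₀¹ 2u du = 1`.
-/

open MeasureTheory Set

theorem mul_setIntegral_Ioo_deriv_comp_add_mul {f : ℝ → ℝ} (hf : ContDiff ℝ 1 f) (a b : ℝ) :
    b * ∫ v in Ioo (0:ℝ) 1, deriv f (a + b * v) = f (a + b) - f a := by
  have hderiv : ∀ v, HasDerivAt (fun v => f (a + b * v)) (b * deriv f (a + b * v)) v := by
    intro v
    have hlin : HasDerivAt (fun v => a + b * v) b v := by
      simpa using ((hasDerivAt_id' v).const_mul b).const_add a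
    rw [mul_comm]
    exact ((hf.differentiable one_ne_zero) (a + b * v)).hasDerivAt.comp v hlin
  have hcont : Continuous fun v => b * deriv f (a + b * v) :=
    continuous_const.mul ((hf.continuous_deriv le_rfl).comp (by fun_prop))
  rw [← integral_const_mul, ← integral_Ioc_eq_integral_Ioo,
    ← intervalIntegral.integral_of_le zero_le_one,
    intervalIntegral.integral_eq_sub_of_hasDerivAt (fun v _ => hderiv v)
      (hcont.intervalIntegrable 0 1)]
  simp

theorem setIntegral_Ioo_two_mul : ∫ u in Ioo (0:ℝ) 1, 2 * u = 1 := by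
  rw [← integral_Ioc_eq_integral_Ioo, ← intervalIntegral.integral_of_le zero_le_one,
    intervalIntegral.integral_const_mul, integral_id]
  norm_num

section

variable {g : ℝ → ℝ} (hg : ContDiff ℝ 2 g) (x : ℝ) {y : ℝ}
include hg

theorem setIntegral_deriv_deriv_mul_two_mul (hy : y ≠ 0) (u : ℝ) :
    (∫ v in Ioo (0:ℝ) 1, deriv (deriv g) (x*(1 - u*y) + u*y*v)) * (2*u)
      = 2 / y * (deriv g (x + y*(1-x)*u) - deriv g (x + -(y*x)*u)) := by
  have hg' : ContDiff ℝ 1 (deriv g) := hg.iterate_deriv' 1 1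
  rw [show x + y*(1-x)*u = x*(1 - u*y) + u*y by ring, show x + -(y*x)*u = x*(1 - u*y) by ring,
    ← mul_setIntegral_Ioo_deriv_comp_add_mul hg']
  field_simp

theorem jump_div_sq_eq_setIntegral_deriv_deriv (hy : y ≠ 0) :
    (x * (g (x*(1-y) + y) - g x) + (1-x) * (g (x*(1-y)) - g x)) / y ^ 2
      = (1/2) * x * (1-x) * ∫ u in Ioo (0:ℝ) 1, (∫ v in Ioo (0:ℝ) 1,
          deriv (deriv g) (x*(1 - u*y) + u*y*v)) * (2*u) := by
  have hg1 : ContDiff ℝ 1 g := hg.of_le (by norm_num)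
  have hint : ∀ c : ℝ, IntegrableOn (fun u => deriv g (x + c*u)) (Ioo (0:ℝ) 1) := fun c =>
    (((hg.iterate_deriv' 1 1).continuous.comp (by fun_prop)).continuousOn.integrableOn_Icc).mono_set
      Ioo_subset_Icc_self
  have hup := mul_setIntegral_Ioo_deriv_comp_add_mul hg1 x (y*(1-x))
  have hdown := mul_setIntegral_Ioo_deriv_comp_add_mul hg1 x (-(y*x))
  rw [show x + y*(1-x) = x*(1-y) + y by ring] at hup
  rw [show x + -(y*x) = x*(1-y) by ring] at hdown
  simp_rw [setIntegral_deriv_deriv_mul_two_mul hg x hy]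
  rw [integral_const_mul, integral_sub (hint _) (hint _)]
  generalize (∫ u in Ioo (0:ℝ) 1, deriv g (x + y*(1-x)*u)) = I₁ at hup ⊢
  generalize (∫ u in Ioo (0:ℝ) 1, deriv g (x + -(y*x)*u)) = I₂ at hdown ⊢
  field_simp
  linear_combination -(x * hup) - (1 - x) * hdown

end

theorem stmt1 (F : Measure ℝ)
    (g : ℝ → ℝ) (hg : ContDiff ℝ 2 g)
    (x : ℝ) :
    (∫ y, (if y = (0:ℝ) then (1/2) * x * (1-x) * deriv (deriv g) x
      else (x * (g (x*(1-y) + y) - g x) + (1-x) * (g (x*(1-y)) - g x)) / y ^ 2) ∂F)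
    = (1/2) * x * (1-x) *
        ∫ y, (∫ u in Set.Ioo (0:ℝ) 1, (∫ v in Set.Ioo (0:ℝ) 1,
          deriv (deriv g) (x*(1 - u*y) + u*y*v)) * (2*u)) ∂F := by
  rw [← integral_const_mul]
  congr with y
  split_ifs with hy
  · subst hy
    simp [integral_const_mul, setIntegral_Ioo_two_mul]
  · exact jump_div_sq_eq_setIntegral_deriv_deriv hg x hy
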